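/- arXiv:2507.21733 — 2 statements merged into one kernel-verified Lean document; each statement's English description precedes it below -/
import Mathlib

section
/- With the edge-substitution setup: let λ ∈ spec(Q_{V^o}) and f an eigenfunction of Q_{V^o} with Qf(a) = −Qf(b) = 1 (where Qf(a) = Σ_{v∈V^o} q(a,v)f(v)). For every cycle C = [x_0, x_1, ..., x_k = x_0] (k ≥ 3) in X with edges e_j = [x_j, x_{j+1}], define sgn_C(e_j) = +1 if e_j^a = x_j and −1 if e_j^a = x_{j+1}, and define f*_C on X[V] by f*_C(e_j, v) = (sgn_C(e_j)/a_X(e_j)) f(v) for v ∈ V^o, and f*_C = 0 on all other vertices of X[V] (including all of X). Then P_* f*_C = λ f*_C. -/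
open Finset

noncomputable section

/-- The interior `V° = V \ {a,b}` of the substituent graph. -/
abbrev Vo (V : Type*) (a b : V) := {v : V // v ≠ a ∧ v ≠ b}

/-- The vertex set of the edge substitution `X[V]`:  `X ∪ (E_X × V°)`. -/
abbrev XVert (X E : Type*) (V : Type*) (a b : V) := X ⊕ (E × Vo V a b)

/-- Total conductance at a vertex of `V`. -/
def mVof {V : Type*} [Fintype V] (aV : V → V → ℝ) (u : V) : ℝ := ∑ v, aV u v

/-- Transition probabilities of the network `(V, a_V)`. -/
def qof {V : Type*} [Fintype V] (aV : V → V → ℝ) (u v : V) : ℝ :=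
  aV u v / mVof aV u

/-- Conductances of the substitution `X[V]`: along each edge `e = [ea e, eb e]` of `X`
(with weight `w e`) a copy of `V` is inserted, identifying `a` with `ea e` and `b`
with `eb e`; the new conductances are the products `w e * aV u v`. -/
def cstar {X E V : Type*} [DecidableEq X] [DecidableEq E] [Fintype E]
    (ea eb : E → X) (w : E → ℝ) (aV : V → V → ℝ) (a b : V) :
    XVert X E V a b → XVert X E V a b → ℝ
  | Sum.inl x, Sum.inl y =>
      ∑ e, if (ea e = x ∧ eb e = y) ∨ (ea e = y ∧ eb e = x) then w e * aV a b else 0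
  | Sum.inl x, Sum.inr ev =>
      w ev.1 * ((if ea ev.1 = x then aV a ev.2.1 else 0) +
        (if eb ev.1 = x then aV b ev.2.1 else 0))
  | Sum.inr ev, Sum.inl x =>
      w ev.1 * ((if ea ev.1 = x then aV ev.2.1 a else 0) +
        (if eb ev.1 = x then aV ev.2.1 b else 0))
  | Sum.inr eu, Sum.inr ev =>
      if eu.1 = ev.1 then w eu.1 * aV eu.2.1 ev.2.1 else 0

/-- Total conductance at a vertex of `X[V]`. -/
def mstar {X E V : Type*} [Fintype X] [DecidableEq X] [DecidableEq E] [Fintype E]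
    [Fintype V] [DecidableEq V]
    (ea eb : E → X) (w : E → ℝ) (aV : V → V → ℝ) (a b : V)
    (p : XVert X E V a b) : ℝ :=
  ∑ q, cstar ea eb w aV a b p q

/-- The reversible stochastic transition matrix `P_*` of `X[V]`. -/
def pstar {X E V : Type*} [Fintype X] [DecidableEq X] [DecidableEq E] [Fintype E]
    [Fintype V] [DecidableEq V]
    (ea eb : E → X) (w : E → ℝ) (aV : V → V → ℝ) (a b : V)
    (p q : XVert X E V a b) : ℝ :=
  cstar ea eb w aV a b p q / mstar ea eb w aV a b p

end

lemma sum_split {V : Type*} [Fintype V] [DecidableEq V] (a b : V) (hab : a ≠ b)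
    (h : V → ℝ) : ∑ u, h u = h a + h b + ∑ u : Vo V a b, h u.1 := by
  classical
  have h1 : ∑ u ∈ univ.filter (fun u => u ≠ a ∧ u ≠ b), h u
      = ∑ u : Vo V a b, h u.1 :=
    Finset.sum_subtype _ (fun u => by simp) h
  rw [← h1, ← Finset.sum_filter_add_sum_filter_not univ (fun u => u ≠ a ∧ u ≠ b) h]
  have hset : univ.filter (fun u => ¬(u ≠ a ∧ u ≠ b)) = ({a, b} : Finset V) := by
    ext u; simp only [mem_filter, mem_univ, true_and, mem_insert, mem_singleton,
      not_and_or, not_not]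
  rw [hset, Finset.sum_pair hab]
  ring

/-- Cycle extension: an interior eigenfunction `f` of `Q_{V°}` with boundary sums
`Qf(a) = 1`, `Qf(b) = -1` spreads along any cycle of `X` (with signs given by the
edge orientations, divided by the edge conductances) to an eigenfunction of `P_*`
with the same eigenvalue, vanishing on `X` and off the cycle. -/
theorem stmt13
    {X E V : Type*} [Fintype X] [Fintype E] [Fintype V]
    [DecidableEq X] [DecidableEq E] [DecidableEq V]
    (ea eb : E → X) (hne : ∀ e, ea e ≠ eb e)
    (hinc : ∀ x, ∃ e, ea e = x ∨ eb e = x)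
    (hXconn : (SimpleGraph.fromRel fun x y => ∃ e, ea e = x ∧ eb e = y).Connected)
    (w : E → ℝ) (hw : ∀ e, 0 < w e)
    (aV : V → V → ℝ) (haVsym : ∀ u v, aV u v = aV v u)
    (haVnn : ∀ u v, 0 ≤ aV u v) (haVdiag : ∀ v, aV v v = 0)
    (hmV : ∀ u, 0 < mVof aV u)
    (hVconn : (SimpleGraph.fromRel fun u v => 0 < aV u v).Connected)
    (a b : V) (hab : a ≠ b)
    (γ : Equiv.Perm V) (hγ : ∀ u v, aV (γ u) (γ v) = aV u v)
    (hγa : γ a = b) (hγb : γ b = a)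
    (lam : ℝ) (f : Vo V a b → ℝ) (hf0 : f ≠ 0)
    (heig : ∀ u : Vo V a b, ∑ v : Vo V a b, qof aV u.1 v.1 * f v = lam * f u)
    (hQa : ∑ v : Vo V a b, qof aV a v.1 * f v = 1)
    (hQb : ∑ v : Vo V a b, qof aV b v.1 * f v = -1)
    (k : ℕ) [NeZero k] (hk : 3 ≤ k)
    (x : ZMod k → X) (e : ZMod k → E)
    (hxinj : Function.Injective x) (heinj : Function.Injective e)
    (hcyc : ∀ j : ZMod k, (ea (e j) = x j ∧ eb (e j) = x (j + 1)) ∨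
        (ea (e j) = x (j + 1) ∧ eb (e j) = x j)) :
    ∀ p : XVert X E V a b,
      ∑ q, pstar ea eb w aV a b p q *
        Sum.elim (fun _ : X => (0:ℝ))
          (fun ev : E × Vo V a b =>
            (∑ j : ZMod k, if e j = ev.1 then
              (if ea (e j) = x j then 1 else -1) / w ev.1 else 0) * f ev.2) q
      = lam * Sum.elim (fun _ : X => (0:ℝ))
          (fun ev : E × Vo V a b =>
            (∑ j : ZMod k, if e j = ev.1 then
              (if ea (e j) = x j then 1 else -1) / w ev.1 else 0) * f ev.2) p := by
  classical
  intro p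
  -- reduce pstar-sum to cstar-sum over mstar
  simp only [pstar, div_mul_eq_mul_div, ← Finset.sum_div]
  rcases p with x0 | Ev
  · simp only [Sum.elim_inl, mul_zero]
    haveI : Fact (1 < k) := ⟨by omega⟩
    -- boundary sums
    have hA : ∑ u : Vo V a b, aV a u.1 * f u = mVof aV a := by
      have h := hQa
      simp only [qof, div_mul_eq_mul_div, ← Finset.sum_div] at h
      rw [div_eq_iff (hmV a).ne'] at h
      linarith
    have hmab : mVof aV b = mVof aV a := by
      have h1 : ∑ u, aV b u = ∑ u, aV b (γ u) := (Equiv.sum_comp γ (aV b)).symm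
      have h2 : ∀ u, aV b (γ u) = aV a u := by
        intro u; rw [← hγa, hγ]
      simp only [h2] at h1
      simpa [mVof] using h1
    have hB : ∑ u : Vo V a b, aV b u.1 * f u = -(mVof aV a) := by
      have h := hQb
      simp only [qof, div_mul_eq_mul_div, ← Finset.sum_div] at h
      rw [div_eq_iff (hmV b).ne'] at h
      rw [← hmab]; linarith
    have hxne : ∀ j : ZMod k, x (j + 1) ≠ x j := by
      intro j h
      have := hxinj h
      have h1 : (1 : ZMod k) = 0 := by
        have := add_left_cancel (a := j) (b := (1:ZMod k)) (c := 0) (by simpa using this)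
        exact this
      exact one_ne_zero h1
    have hnum : (∑ q, cstar ea eb w aV a b (Sum.inl x0 : XVert X E V a b) q *
          Sum.elim (fun _ : X => (0:ℝ))
            (fun ev : E × Vo V a b =>
              (∑ j : ZMod k, if e j = ev.1 then
                (if ea (e j) = x j then 1 else -1) / w ev.1 else 0) * f ev.2) q) = 0 := by
      rw [Fintype.sum_sum_type]
      simp only [Sum.elim_inl, Sum.elim_inr, mul_zero, Finset.sum_const_zero, zero_add]
      rw [Fintype.sum_prod_type]
      simp only [cstar]
      have key : ∀ E'' : E, (∑ u : Vo V a b,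
            w E'' * ((if ea E'' = x0 then aV a u.1 else 0) +
              (if eb E'' = x0 then aV b u.1 else 0)) *
            ((∑ j : ZMod k, if e j = E'' then
                (if ea (e j) = x j then 1 else -1) / w E'' else 0) * f u))
          = (w E'' * (∑ j : ZMod k, if e j = E'' then
                (if ea (e j) = x j then 1 else -1) / w E'' else 0)) *
            ((if ea E'' = x0 then mVof aV a else 0) -
              (if eb E'' = x0 then mVof aV a else 0)) := by
        intro E''
        have hterm : ∀ u : Vo V a b,
            w E'' * ((if ea E'' = x0 then aV a u.1 else 0) +
              (if eb E'' = x0 then aV b u.1 else 0)) *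
            ((∑ j : ZMod k, if e j = E'' then
                (if ea (e j) = x j then 1 else -1) / w E'' else 0) * f u)
            = (w E'' * (∑ j : ZMod k, if e j = E'' then
                (if ea (e j) = x j then 1 else -1) / w E'' else 0)) *
              ((if ea E'' = x0 then aV a u.1 * f u else 0) +
                (if eb E'' = x0 then aV b u.1 * f u else 0)) := by
          intro u; split_ifs <;> ring
        rw [Finset.sum_congr rfl fun u _ => hterm u, ← Finset.mul_sum,
          Finset.sum_add_distrib]
        by_cases h1 : ea E'' = x0 <;> by_cases h2 : eb E'' = x0 <;>
          simp [h1, h2, hA, hB] <;> ring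
      rw [Finset.sum_congr rfl fun E'' _ => key E'']
      have hwc : ∀ E'' : E, w E'' * (∑ j : ZMod k, if e j = E'' then
            (if ea (e j) = x j then 1 else -1) / w E'' else 0)
          = ∑ j : ZMod k, if e j = E'' then
              (if ea (e j) = x j then (1:ℝ) else -1) else 0 := by
        intro E''
        rw [Finset.mul_sum]
        refine Finset.sum_congr rfl fun j _ => ?_
        split_ifs <;> simp [mul_inv_cancel₀ (hw E'').ne', neg_div, div_eq_mul_inv]
      simp only [hwc, Finset.sum_mul]
      rw [Finset.sum_comm]
      have hEsum : ∀ j : ZMod k, (∑ E'' : E,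
            (if e j = E'' then (if ea (e j) = x j then (1:ℝ) else -1) else 0) *
            ((if ea E'' = x0 then mVof aV a else 0) -
              (if eb E'' = x0 then mVof aV a else 0)))
          = (if ea (e j) = x j then (1:ℝ) else -1) *
            ((if ea (e j) = x0 then mVof aV a else 0) -
              (if eb (e j) = x0 then mVof aV a else 0)) := by
        intro j
        simp only [ite_mul, zero_mul]
        rw [Finset.sum_ite_eq]
        simp
      rw [Finset.sum_congr rfl fun j _ => hEsum j]
      have hstep : ∀ j : ZMod k, (if ea (e j) = x j then (1:ℝ) else -1) *
            ((if ea (e j) = x0 then mVof aV a else 0) -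
              (if eb (e j) = x0 then mVof aV a else 0))
          = mVof aV a * ((if x j = x0 then (1:ℝ) else 0) -
              (if x (j + 1) = x0 then 1 else 0)) := by
        intro j
        rcases hcyc j with ⟨h1, h2⟩ | ⟨h1, h2⟩
        · simp only [h1, h2, if_pos rfl]
          split_ifs <;> ring
        · rw [h1, h2, if_neg (hxne j)]
          split_ifs <;> ring
      rw [Finset.sum_congr rfl fun j _ => hstep j, ← Finset.mul_sum,
        Finset.sum_sub_distrib]
      have hshift : (∑ j : ZMod k, if x (j + 1) = x0 then (1:ℝ) else 0)
          = ∑ j : ZMod k, if x j = x0 then (1:ℝ) else 0 :=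
        Fintype.sum_equiv (Equiv.addRight (1 : ZMod k)) _ _ (fun j => rfl)
      rw [hshift]
      ring
    rw [hnum, zero_div]
  · obtain ⟨E', v⟩ := Ev
    simp only [Sum.elim_inr]
    -- mstar value
    have hm : mstar ea eb w aV a b (Sum.inr (E', v) : XVert X E V a b)
        = w E' * mVof aV v.1 := by
      rw [mstar, Fintype.sum_sum_type]
      have h1 : ∑ y : X, cstar ea eb w aV a b (Sum.inr (E', v)) (Sum.inl y)
          = w E' * aV v.1 a + w E' * aV v.1 b := by
        simp only [cstar, mul_add, Finset.sum_add_distrib, ← Finset.mul_sum]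
        rw [Finset.sum_ite_eq, Finset.sum_ite_eq]
        simp
      have h2 : ∑ eu : E × Vo V a b, cstar ea eb w aV a b (Sum.inr (E', v)) (Sum.inr eu)
          = w E' * ∑ u : Vo V a b, aV v.1 u.1 := by
        rw [Fintype.sum_prod_type]
        simp only [cstar]
        rw [Finset.sum_comm]
        simp [Finset.mul_sum]
      rw [h1, h2, mVof, sum_split a b hab (aV v.1)]
      ring
    have hnum : (∑ q, cstar ea eb w aV a b (Sum.inr (E', v)) q *
          Sum.elim (fun _ : X => (0:ℝ))
            (fun ev : E × Vo V a b =>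
              (∑ j : ZMod k, if e j = ev.1 then
                (if ea (e j) = x j then 1 else -1) / w ev.1 else 0) * f ev.2) q)
        = w E' * ((∑ j : ZMod k, if e j = E' then
                (if ea (e j) = x j then 1 else -1) / w E' else 0)
            * ∑ u : Vo V a b, aV v.1 u.1 * f u) := by
      rw [Fintype.sum_sum_type]
      simp only [Sum.elim_inl, Sum.elim_inr, mul_zero, Finset.sum_const_zero, zero_add]
      rw [Fintype.sum_prod_type]
      simp only [cstar]
      rw [Finset.sum_comm]
      simp [Finset.mul_sum]
      exact Finset.sum_congr rfl fun u _ => by ring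
    have hS : ∑ u : Vo V a b, aV v.1 u.1 * f u = lam * f v * mVof aV v.1 := by
      have h := heig v
      simp only [qof, div_mul_eq_mul_div, ← Finset.sum_div] at h
      rw [div_eq_iff (hmV v.1).ne'] at h
      linarith
    rw [hnum, hm, hS, div_eq_iff (mul_pos (hw E') (hmV v.1)).ne']
    ring
end

section
/- With the edge-substitution setup: let λ ∈ spec(Q_{V^o}) be of type (IV°), i.e., there are eigenfunctions g, h of Q_{V^o} with eigenvalue λ satisfying Qg(a) = Qh(b) = 1 and Qg(b) = Qh(a) = 0. For any two distinct edges e = [x,y] and ē = [x, ȳ] of X sharing the endpoint x, define g* on X[V] by g*(e,v) = (1/a_X(e))·(g(v) if x = e^a, h(v) if x = e^b), g*(ē,v) = (−1/a_X(ē))·(g(v) if x = ē^a, h(v) if x = ē^b), g* = 0 at all other vertices of X[V]. Then P_* g* = λ g*, and g* vanishes identically on X ⊂ X[V]. -/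
open Finset

lemma sumVo' {V : Type*} [Fintype V] [DecidableEq V] (a b : V) (hab : a ≠ b) (F : V → ℝ) :
    ∑ v : Vo V a b, F v.1 = (∑ v, F v) - F a - F b := by
  have h1 : ∑ v ∈ Finset.univ.filter (fun v => v ≠ a ∧ v ≠ b), F v
      = ∑ v : {v : V // v ≠ a ∧ v ≠ b}, F v.1 :=
    Finset.sum_subtype _ (by simp) F
  have h2 : Finset.univ.filter (fun v : V => v ≠ a ∧ v ≠ b) = Finset.univ \ ({a, b} : Finset V) := by
    ext v; simp [not_or]
  rw [← h1, h2, Finset.sum_sdiff_eq_sub (Finset.subset_univ _), Finset.sum_pair hab]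
  ring

/-- Type (IV°) extension: interior eigenfunctions `g, h` with `Qg(a) = Qh(b) = 1`,
`Qg(b) = Qh(a) = 0` produce, for any two distinct edges `e, ē` sharing the endpoint
`x`, an eigenfunction of `P_*` with the same eigenvalue which vanishes identically on
`X ⊂ X[V]` and off the two substituted copies. -/
theorem stmt14
    {X E V : Type*} [Fintype X] [Fintype E] [Fintype V]
    [DecidableEq X] [DecidableEq E] [DecidableEq V]
    (ea eb : E → X) (hne : ∀ e, ea e ≠ eb e)
    (hinc : ∀ x, ∃ e, ea e = x ∨ eb e = x)
    (hXconn : (SimpleGraph.fromRel fun x y => ∃ e, ea e = x ∧ eb e = y).Connected)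
    (w : E → ℝ) (hw : ∀ e, 0 < w e)
    (aV : V → V → ℝ) (haVsym : ∀ u v, aV u v = aV v u)
    (haVnn : ∀ u v, 0 ≤ aV u v) (haVdiag : ∀ v, aV v v = 0)
    (hmV : ∀ u, 0 < mVof aV u)
    (hVconn : (SimpleGraph.fromRel fun u v => 0 < aV u v).Connected)
    (a b : V) (hab : a ≠ b)
    (γ : Equiv.Perm V) (hγ : ∀ u v, aV (γ u) (γ v) = aV u v)
    (hγa : γ a = b) (hγb : γ b = a)
    (lam : ℝ) (g h : Vo V a b → ℝ)
    (heigg : ∀ u : Vo V a b, ∑ v : Vo V a b, qof aV u.1 v.1 * g v = lam * g u)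
    (heigh : ∀ u : Vo V a b, ∑ v : Vo V a b, qof aV u.1 v.1 * h v = lam * h u)
    (hga : ∑ v : Vo V a b, qof aV a v.1 * g v = 1)
    (hgb : ∑ v : Vo V a b, qof aV b v.1 * g v = 0)
    (hhb : ∑ v : Vo V a b, qof aV b v.1 * h v = 1)
    (hha : ∑ v : Vo V a b, qof aV a v.1 * h v = 0)
    (e ebar : E) (hee : e ≠ ebar) (x : X)
    (hxe : ea e = x ∨ eb e = x) (hxebar : ea ebar = x ∨ eb ebar = x) :
    (∀ p : XVert X E V a b,
      ∑ q, pstar ea eb w aV a b p q *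
        Sum.elim (fun _ : X => (0:ℝ))
          (fun ev : E × Vo V a b =>
            if ev.1 = e then (if ea e = x then g ev.2 else h ev.2) / w e
            else if ev.1 = ebar then
              -((if ea ebar = x then g ev.2 else h ev.2) / w ebar)
            else 0) q
      = lam * Sum.elim (fun _ : X => (0:ℝ))
          (fun ev : E × Vo V a b =>
            if ev.1 = e then (if ea e = x then g ev.2 else h ev.2) / w e
            else if ev.1 = ebar then
              -((if ea ebar = x then g ev.2 else h ev.2) / w ebar)
            else 0) p) ∧
    (∀ y : X,
      Sum.elim (fun _ : X => (0:ℝ))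
          (fun ev : E × Vo V a b =>
            if ev.1 = e then (if ea e = x then g ev.2 else h ev.2) / w e
            else if ev.1 = ebar then
              -((if ea ebar = x then g ev.2 else h ev.2) / w ebar)
            else 0) (Sum.inl y) = 0) := by
  have hw' : ∀ c, (w c : ℝ) ≠ 0 := fun c => (hw c).ne'
  have hm' : ∀ u, mVof aV u ≠ 0 := fun u => (hmV u).ne'
  set Fn : XVert X E V a b → ℝ := Sum.elim (fun _ : X => (0:ℝ))
          (fun ev : E × Vo V a b =>
            if ev.1 = e then (if ea e = x then g ev.2 else h ev.2) / w e
            else if ev.1 = ebar then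
              -((if ea ebar = x then g ev.2 else h ev.2) / w ebar)
            else 0) with hFn
  have FnL : ∀ y : X, Fn (Sum.inl y) = 0 := fun y => rfl
  have Fne : ∀ v : Vo V a b, Fn (Sum.inr (e, v)) = (if ea e = x then g v else h v) / w e := by
    intro v; rw [hFn]; simp
  have Fnebar : ∀ v : Vo V a b,
      Fn (Sum.inr (ebar, v)) = -((if ea ebar = x then g v else h v) / w ebar) := by
    intro v; rw [hFn]; simp [Ne.symm hee]
  have Fno : ∀ (c : E) (v : Vo V a b), c ≠ e → c ≠ ebar → Fn (Sum.inr (c, v)) = 0 := by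
    intro c v h1 h2; rw [hFn]; simp [h1, h2]
  have mVab : mVof aV a = mVof aV b := by
    unfold mVof
    conv_rhs => rw [← Equiv.sum_comp γ (fun v => aV b v)]
    exact Finset.sum_congr rfl fun v _ => by rw [← hγa, hγ]
  have sum_aV : ∀ (u : V) (f : Vo V a b → ℝ),
      ∑ v : Vo V a b, aV u v.1 * f v = mVof aV u * ∑ v : Vo V a b, qof aV u v.1 * f v := by
    intro u f
    rw [Finset.mul_sum]
    refine Finset.sum_congr rfl fun v _ => ?_
    rw [qof]
    have := hm' u
    field_simp
  have key : ∀ c : E, (ea c = x ∨ eb c = x) → ∀ y : X,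
      (∑ v : Vo V a b, ((if ea c = y then aV a v.1 else 0) + (if eb c = y then aV b v.1 else 0))
        * (if ea c = x then g v else h v))
      = if y = x then mVof aV a else 0 := by
    intro c hc y
    rcases hc with hc | hc
    · have hbc : eb c ≠ x := fun hh => hne c (hc.trans hh.symm)
      by_cases hyx : y = x
      · subst hyx
        rw [if_pos rfl]
        simp only [if_pos hc, if_neg hbc, add_zero]
        rw [sum_aV a g, hga, mul_one]
      · rw [if_neg hyx]
        have hay : ea c ≠ y := fun hh => hyx (hc.symm.trans hh).symm
        by_cases hby : eb c = y
        · simp only [if_neg hay, if_pos hby, zero_add, if_pos hc]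
          rw [sum_aV b g, hgb, mul_zero]
        · simp only [if_neg hay, if_neg hby, add_zero, zero_mul, Finset.sum_const_zero]
    · have hax : ea c ≠ x := fun hh => hne c (hh.trans hc.symm)
      by_cases hyx : y = x
      · subst hyx
        rw [if_pos rfl]
        simp only [if_neg hax, if_pos hc, zero_add]
        rw [sum_aV b h, hhb, mul_one]
        exact mVab.symm
      · rw [if_neg hyx]
        have hby : eb c ≠ y := fun hh => hyx (hc.symm.trans hh).symm
        by_cases hay : ea c = y
        · simp only [if_pos hay, if_neg hby, add_zero, if_neg hax]
          rw [sum_aV a h, hha, mul_zero]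
        · simp only [if_neg hay, if_neg hby, add_zero, zero_mul, Finset.sum_const_zero]
  have hmstar : ∀ (c : E) (u : Vo V a b),
      mstar ea eb w aV a b (Sum.inr (c, u)) = w c * mVof aV u.1 := by
    intro c u
    unfold mstar
    rw [Fintype.sum_sum_type]
    have h1 : (∑ x' : X, cstar ea eb w aV a b (Sum.inr (c, u)) (Sum.inl x'))
        = w c * (aV u.1 a + aV u.1 b) := by
      simp only [cstar]
      rw [← Finset.mul_sum]
      congr 1
      rw [Finset.sum_add_distrib, Finset.sum_ite_eq, Finset.sum_ite_eq]
      simp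
    have h2 : (∑ ev : E × Vo V a b, cstar ea eb w aV a b (Sum.inr (c, u)) (Sum.inr ev))
        = w c * ∑ v : Vo V a b, aV u.1 v.1 := by
      rw [Fintype.sum_prod_type_right]
      simp only [cstar]
      rw [Finset.mul_sum]
      refine Finset.sum_congr rfl fun v _ => ?_
      rw [Finset.sum_ite_eq]
      simp
    rw [h1, h2, sumVo' a b hab (fun v => aV u.1 v)]
    unfold mVof
    ring
  refine ⟨fun p => ?_, fun y => rfl⟩
  rcases p with y | ⟨c, u⟩
  · -- vertex of X
    have num0 : (∑ q, cstar ea eb w aV a b (Sum.inl y) q * Fn q) = 0 := by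
      rw [Fintype.sum_sum_type]
      have hA : (∑ x' : X, cstar ea eb w aV a b (Sum.inl y) (Sum.inl x') * Fn (Sum.inl x')) = 0 := by
        simp [FnL]
      rw [hA, zero_add, Fintype.sum_prod_type]
      have inner : ∀ e' : E,
          (∑ v : Vo V a b, cstar ea eb w aV a b (Sum.inl y) (Sum.inr (e', v)) * Fn (Sum.inr (e', v)))
          = (if e' = e then (if y = x then mVof aV a else 0) else 0)
            + (if e' = ebar then -(if y = x then mVof aV a else 0) else 0) := by
        intro e'
        by_cases h1 : e' = e
        · subst h1
          rw [if_pos rfl, if_neg hee, add_zero, ← key e' hxe y]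
          refine Finset.sum_congr rfl fun v _ => ?_
          simp only [cstar, Fne]
          have hwe := hw' e'
          split_ifs <;> field_simp <;> ring
        · by_cases h2 : e' = ebar
          · subst h2
            rw [if_neg h1, if_pos rfl, zero_add, ← key e' hxebar y, ← Finset.sum_neg_distrib]
            refine Finset.sum_congr rfl fun v _ => ?_
            simp only [cstar, Fnebar]
            have hwe := hw' e'
            split_ifs <;> field_simp <;> ring
          · simp only [Fno e' _ h1 h2, mul_zero, Finset.sum_const_zero, if_neg h1, if_neg h2,
              add_zero]
      simp only [inner]
      rw [Finset.sum_add_distrib, Finset.sum_ite_eq', Finset.sum_ite_eq']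
      simp
    simp only [pstar, div_mul_eq_mul_div]
    rw [← Finset.sum_div, num0, zero_div, FnL, mul_zero]
  · -- interior vertex
    have num : (∑ q, cstar ea eb w aV a b (Sum.inr (c, u)) q * Fn q)
        = ∑ v : Vo V a b, w c * aV u.1 v.1 * Fn (Sum.inr (c, v)) := by
      rw [Fintype.sum_sum_type]
      have hA : (∑ x' : X, cstar ea eb w aV a b (Sum.inr (c, u)) (Sum.inl x') * Fn (Sum.inl x')) = 0 := by
        simp [FnL]
      rw [hA, zero_add, Fintype.sum_prod_type_right]
      refine Finset.sum_congr rfl fun v _ => ?_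
      have hterm : ∀ e' : E,
          cstar ea eb w aV a b (Sum.inr (c, u)) (Sum.inr (e', v)) * Fn (Sum.inr (e', v))
          = if c = e' then (w c * aV u.1 v.1 * Fn (Sum.inr (e', v))) else 0 := by
        intro e'
        simp only [cstar]
        rw [ite_mul, zero_mul]
      simp only [hterm]
      rw [Finset.sum_ite_eq]
      simp
    simp only [pstar, div_mul_eq_mul_div]
    rw [← Finset.sum_div, num, hmstar c u]
    have hsum : (∑ v : Vo V a b, w c * aV u.1 v.1 * Fn (Sum.inr (c, v))) / (w c * mVof aV u.1)
        = ∑ v : Vo V a b, qof aV u.1 v.1 * Fn (Sum.inr (c, v)) := by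
      rw [Finset.sum_div]
      refine Finset.sum_congr rfl fun v _ => ?_
      rw [qof]
      have h1 := hw' c
      have h2 := hm' u.1
      field_simp
    rw [hsum]
    by_cases hc : c = e
    · subst hc
      simp only [Fne]
      have hdiv : ∀ f : Vo V a b → ℝ,
          (∑ v : Vo V a b, qof aV u.1 v.1 * (f v / w c)) = (∑ v : Vo V a b, qof aV u.1 v.1 * f v) / w c := by
        intro f
        rw [Finset.sum_div]
        exact Finset.sum_congr rfl fun v _ => (mul_div_assoc _ _ _).symm
      by_cases hax : ea c = x
      · simp only [if_pos hax]
        rw [hdiv g, heigg u, mul_div_assoc]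
      · simp only [if_neg hax]
        rw [hdiv h, heigh u, mul_div_assoc]
    · by_cases hc2 : c = ebar
      · subst hc2
        simp only [Fnebar, mul_neg]
        rw [Finset.sum_neg_distrib]
        congr 1
        have hdiv : ∀ f : Vo V a b → ℝ,
            (∑ v : Vo V a b, qof aV u.1 v.1 * (f v / w c)) = (∑ v : Vo V a b, qof aV u.1 v.1 * f v) / w c := by
          intro f
          rw [Finset.sum_div]
          exact Finset.sum_congr rfl fun v _ => (mul_div_assoc _ _ _).symm
        by_cases hax : ea c = x
        · simp only [if_pos hax]
          rw [hdiv g, heigg u, mul_div_assoc]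
        · simp only [if_neg hax]
          rw [hdiv h, heigh u, mul_div_assoc]
      · simp only [Fno c _ hc hc2, mul_zero, Finset.sum_const_zero]
end
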